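/- arXiv:1310.5292 — 2 statements merged into one kernel-verified Lean document; each statement's English description precedes it below -/
import Mathlib

section
/- Let A be an n×n nonnegative irreducible matrix with row sums r₁ ≥ r₂ ≥ ... ≥ r_n. Let M = max_i a_{ii} and N = max_{i≠j} a_{ij}, and assume N > 0. Then for each 1 ≤ i ≤ n, ρ(A) ≤ (r_i + M − N + √((r_i − M + N)² + 4N·Σ_{k=1}^{i−1}(r_k − r_i)))/2. -/
/-!
Collatz–Wielandt: if a nonnegative matrix `A` admits a positive vector `d` with `A d ≤ B d`,
then every eigenvalue `z` satisfies `|z| ≤ B` (look at a coordinate maximising `|v_l| / d_l`).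
Fix a threshold `t`, let `w_l = max (r_l - t) 0` be the excess of the `l`-th row sum and `S = ∑ w_l`,
and take `d = c + w` with `c = B - M + N`. Bounding the diagonal by `M` and the off-diagonal entries
by `N`, `(A d)_j ≤ c r_j + N S + (M - N) w_j`, which is at most `B d_j` as soon as
`N S ≤ (B - t) c`. The smallest such `B` is the larger root of `(B - t)(B - M + N) = N S`, i.e. the
bound of the theorem for `t = r_i`, where `S = ∑_{k<i} (r_k - r_i)` because the rows are sorted.
-/

open Matrix Finset Real

/-- Spectral radius: largest modulus of a complex eigenvalue (root of the
characteristic polynomial). -/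
noncomputable def specRad {n : ℕ} (A : Matrix (Fin n) (Fin n) ℝ) : ℝ :=
  (((A.map (Complex.ofReal)).charpoly.roots).map (fun z => ‖z‖)).foldr max 0

/-- Irreducibility of a nonnegative matrix. -/
def Irred {n : ℕ} (A : Matrix (Fin n) (Fin n) ℝ) : Prop :=
  ∀ i j : Fin n, ∃ k : ℕ, 0 < (A ^ k) i j

theorem Multiset.foldr_max_le {α : Type*} [LinearOrder α] {s : Multiset α} {b B : α}
    (hb : b ≤ B) (h : ∀ x ∈ s, x ≤ B) : s.foldr max b ≤ B := by
  induction s using Multiset.induction_on with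
  | empty => simpa using hb
  | cons a t ih =>
    rw [Multiset.foldr_cons]
    exact max_le (h a (Multiset.mem_cons_self a t))
      (ih fun x hx => h x (Multiset.mem_cons_of_mem hx))

theorem Matrix.exists_mulVec_eq_smul_of_isRoot_charpoly {ι K : Type*} [Fintype ι] [DecidableEq ι]
    [Field K] {A : Matrix ι ι K} {z : K} (h : A.charpoly.IsRoot z) :
    ∃ v ≠ 0, A *ᵥ v = z • v := by
  have hz := Matrix.mem_spectrum_iff_isRoot_charpoly.mpr h
  rw [← Matrix.spectrum_toLin', ← Module.End.hasEigenvalue_iff_mem_spectrum] at hz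
  obtain ⟨v, hv, hv0⟩ := hz.exists_hasEigenvector
  exact ⟨v, hv0, Module.End.mem_eigenspace_iff.mp hv⟩

theorem specRad_le {n : ℕ} {A : Matrix (Fin n) (Fin n) ℝ} {B : ℝ} (hB : 0 ≤ B)
    (h : ∀ (z : ℂ) (v : Fin n → ℂ), v ≠ 0 → A.map (↑) *ᵥ v = z • v → ‖z‖ ≤ B) :
    specRad A ≤ B := by
  refine Multiset.foldr_max_le hB fun x hx => ?_
  obtain ⟨z, hz, rfl⟩ := Multiset.mem_map.mp hx
  obtain ⟨v, hv, hAv⟩ :=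
    Matrix.exists_mulVec_eq_smul_of_isRoot_charpoly (Polynomial.mem_roots'.mp hz).2
  exact h z v hv hAv

theorem norm_le_of_mulVec_le_smul {ι : Type*} [Fintype ι] {A : Matrix ι ι ℝ}
    (hA : ∀ i j, 0 ≤ A i j) {d : ι → ℝ} (hd : ∀ i, 0 < d i) {B : ℝ} (hAd : A *ᵥ d ≤ B • d)
    {z : ℂ} {v : ι → ℂ} (hv : v ≠ 0) (hAv : A.map (↑) *ᵥ v = z • v) : ‖z‖ ≤ B := by
  obtain ⟨l, hl⟩ := Function.ne_iff.mp hv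
  obtain ⟨j, -, hj⟩ := exists_max_image univ (fun l => ‖v l‖ / d l) ⟨l, mem_univ l⟩
  set t := ‖v j‖ / d j
  have hvt : ∀ l, ‖v l‖ ≤ t * d l := fun l => (div_le_iff₀ (hd l)).mp (hj l (mem_univ l))
  have ht : 0 < t :=
    pos_of_mul_pos_left ((norm_pos_iff.mpr hl).trans_le (hvt l)) (hd l).le
  have hvj : ‖v j‖ = t * d j := (div_mul_cancel₀ _ (hd j).ne').symm
  have hz : ‖z‖ * ‖v j‖ ≤ B * ‖v j‖ :=
    calc ‖z‖ * ‖v j‖ = ‖∑ l, (A j l : ℂ) * v l‖ := by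
          rw [← norm_mul, ← smul_eq_mul, ← Pi.smul_apply, ← hAv]; rfl
      _ ≤ ∑ l, A j l * ‖v l‖ := by
          refine (norm_sum_le _ _).trans_eq (sum_congr rfl fun l _ => ?_)
          rw [norm_mul, Complex.norm_real, Real.norm_of_nonneg (hA j l)]
      _ ≤ ∑ l, A j l * (t * d l) :=
          sum_le_sum fun l _ => mul_le_mul_of_nonneg_left (hvt l) (hA j l)
      _ = t * (A *ᵥ d) j := by
          simp only [mulVec, dotProduct, mul_sum]
          exact sum_congr rfl fun l _ => by ring
      _ ≤ t * (B * d j) := mul_le_mul_of_nonneg_left (hAd j) ht.le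
      _ = B * ‖v j‖ := by rw [hvj]; ring
  exact le_of_mul_le_mul_right hz (by rw [hvj]; exact mul_pos ht (hd j))

theorem sum_mul_le_of_diag_le_of_offDiag_le {ι : Type*} [Fintype ι] [DecidableEq ι]
    {A : Matrix ι ι ℝ} {M N : ℝ} (hM : ∀ j, A j j ≤ M) (hN : ∀ j l, j ≠ l → A j l ≤ N)
    {w : ι → ℝ} (hw : ∀ l, 0 ≤ w l) (j : ι) :
    ∑ l, A j l * w l ≤ M * w j + N * (∑ l, w l - w j) := by
  rw [← add_sum_erase univ _ (mem_univ j), ← sum_erase_eq_sub (mem_univ j), mul_sum]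
  gcongr with l hl
  · exact hw j
  · exact hM j
  · exact hw l
  · exact hN j l (ne_of_mem_erase hl).symm

def rowExcess {ι : Type*} [Fintype ι] (A : Matrix ι ι ℝ) (t : ℝ) (l : ι) : ℝ :=
  max (∑ k, A l k - t) 0

theorem mulVec_le_smul_of_rowExcess {ι : Type*} [Fintype ι] [DecidableEq ι] {A : Matrix ι ι ℝ}
    {M N t B : ℝ} (hM : ∀ j, A j j ≤ M) (hN : ∀ j l, j ≠ l → A j l ≤ N) (hc : 0 ≤ B - M + N)
    (hB : N * ∑ l, rowExcess A t l ≤ (B - t) * (B - M + N)) :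
    A *ᵥ (fun l => B - M + N + rowExcess A t l) ≤ B • fun l => B - M + N + rowExcess A t l := by
  intro j
  have hw : ∀ l, 0 ≤ rowExcess A t l := fun l => le_max_right _ _
  have hrow := sum_mul_le_of_diag_le_of_offDiag_le hM hN hw j
  have hexcess : (B - M + N) * (∑ k, A j k - t) ≤ (B - M + N) * rowExcess A t j :=
    mul_le_mul_of_nonneg_left (le_max_left _ _) hc
  have hsplit : (A *ᵥ fun l => B - M + N + rowExcess A t l) j
      = (B - M + N) * ∑ k, A j k + ∑ l, A j l * rowExcess A t l := by
    simp only [mulVec, dotProduct, mul_sum, ← sum_add_distrib]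
    exact sum_congr rfl fun l _ => by ring
  simp only [hsplit, Pi.smul_apply, smul_eq_mul]
  linarith

noncomputable def rowSumBound (a M N S : ℝ) : ℝ :=
  (a + M - N + √((a - M + N) ^ 2 + 4 * N * S)) / 2

section rowSumBound

variable {a M N S : ℝ}

theorem rowSumBound_sub_mul_sub (hNS : 0 ≤ N * S) :
    (rowSumBound a M N S - a) * (rowSumBound a M N S - M + N) = N * S := by
  have h := Real.sq_sqrt (by nlinarith : 0 ≤ (a - M + N) ^ 2 + 4 * N * S)
  unfold rowSumBound
  linear_combination h / 4

theorem le_rowSumBound (hNS : 0 ≤ N * S) : a ≤ rowSumBound a M N S := by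
  have h := Real.abs_le_sqrt (le_add_of_nonneg_right (by linarith : 0 ≤ 4 * N * S) :
    (a - M + N) ^ 2 ≤ (a - M + N) ^ 2 + 4 * N * S)
  unfold rowSumBound
  linarith [le_abs_self (a - M + N)]

end rowSumBound

theorem specRad_le_rowSumBound {n : ℕ} {A : Matrix (Fin n) (Fin n) ℝ} (hA : ∀ i j, 0 ≤ A i j)
    {M N t : ℝ} (hM : ∀ j, A j j ≤ M) (hMA : ∃ l, M = A l l) (hN : ∀ j l, j ≠ l → A j l ≤ N)
    (hNpos : 0 < N) (ht : 0 ≤ t) :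
    specRad A ≤ rowSumBound t M N (∑ l, rowExcess A t l) := by
  set S := ∑ l, rowExcess A t l
  set B := rowSumBound t M N S
  have hNS : 0 ≤ N * S := mul_nonneg hNpos.le (sum_nonneg fun l _ => le_max_right _ _)
  have hBt : t ≤ B := le_rowSumBound hNS
  have hkey : (B - t) * (B - M + N) = N * S := rowSumBound_sub_mul_sub hNS
  have hc : 0 < B - M + N := by
    rcases lt_or_ge (M - N) t with h | h
    · linarith
    · obtain ⟨l, hl⟩ := hMA
      have hSN : N ≤ S :=
        calc N ≤ ∑ k, A l k - t := by
              linarith [single_le_sum (fun k _ => hA l k) (mem_univ l)]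
          _ ≤ rowExcess A t l := le_max_left _ _
          _ ≤ S := single_le_sum (f := rowExcess A t) (fun l _ => le_max_right _ _) (mem_univ l)
      refine pos_of_mul_pos_right ?_ (sub_nonneg.mpr hBt)
      rw [hkey]
      exact mul_pos hNpos (hNpos.trans_le hSN)
  refine specRad_le (ht.trans hBt) fun z v hv hAv => ?_
  exact norm_le_of_mulVec_le_smul hA (fun l => add_pos_of_pos_of_nonneg hc (le_max_right _ _))
    (mulVec_le_smul_of_rowExcess hM hN hc.le hkey.ge) hv hAv

theorem Finset.sum_Iio_sub_eq_sum_max_sub {α : Type*} [Fintype α] [LinearOrder α]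
    [LocallyFiniteOrderBot α] {r : α → ℝ} (hr : Antitone r) (i : α) :
    ∑ k ∈ Iio i, (r k - r i) = ∑ l, max (r l - r i) 0 := by
  rw [← sum_subset (subset_univ (Iio i)) fun l _ hl => max_eq_right (sub_nonpos.mpr
    (hr (not_lt.mp (fun h => hl (mem_Iio.mpr h)))))]
  exact sum_congr rfl fun k hk => (max_eq_left (sub_nonneg.mpr (hr (mem_Iio.mp hk).le))).symm

theorem stmt_3_general {n : ℕ} (A : Matrix (Fin n) (Fin n) ℝ)
    (hA : ∀ i j, 0 ≤ A i j)
    (r : Fin n → ℝ) (hr : ∀ i, r i = ∑ j, A i j)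
    (M : ℝ) (hM : IsGreatest {x | ∃ i, x = A i i} M)
    (N : ℝ) (hN : IsGreatest {x | ∃ i j, i ≠ j ∧ x = A i j} N)
    (hord : ∀ i j : Fin n, i ≤ j → r j ≤ r i) (hNpos : 0 < N) :
    ∀ i : Fin n, specRad A ≤
      (r i + M - N +
        Real.sqrt ((r i - M + N) ^ 2 + 4 * N * ∑ k ∈ Finset.Iio i, (r k - r i))) / 2 := by
  intro i
  rw [Finset.sum_Iio_sub_eq_sum_max_sub hord]
  obtain rfl : r = fun l => ∑ k, A l k := funext hr
  exact specRad_le_rowSumBound hA (fun j => hM.2 ⟨j, rfl⟩) hM.1 (fun j l h => hN.2 ⟨j, l, h, rfl⟩)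
    hNpos (sum_nonneg fun k _ => hA i k)

theorem stmt_3 {n : ℕ} (A : Matrix (Fin n) (Fin n) ℝ)
    (hA : ∀ i j, 0 ≤ A i j) (hirr : Irred A)
    (r : Fin n → ℝ) (hr : ∀ i, r i = ∑ j, A i j)
    (M : ℝ) (hM : IsGreatest {x | ∃ i, x = A i i} M)
    (N : ℝ) (hN : IsGreatest {x | ∃ i j, i ≠ j ∧ x = A i j} N)
    (hord : ∀ i j : Fin n, i ≤ j → r j ≤ r i) (hNpos : 0 < N) :
    ∀ i : Fin n, specRad A ≤
      (r i + M - N +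
        Real.sqrt ((r i - M + N) ^ 2 + 4 * N * ∑ k ∈ Finset.Iio i, (r k - r i))) / 2 :=
  stmt_3_general A hA r hr M hM N hN hord hNpos
end

section
/- Let A be an n×n nonnegative irreducible matrix with row sums r₁ ≥ r₂ ≥ ... ≥ r_n. Let S = min_i a_{ii} and T = min_{i≠j} a_{ij}. Then ρ(A) ≥ (r_n + S − T + √((r_n − S + T)² + 4T·Σ_{k=1}^{n−1}(r_k − r_n)))/2. -/
open Matrix Finset Real

/-!
Collatz–Wielandt argument: if `B • x ≤ A *ᵥ x` for a nonnegative matrix `A` and a nonnegative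
nonzero vector `x`, then `B ^ k` is bounded by a row sum of `A ^ k`, hence by `‖A ^ k‖`, and
Gelfand's formula gives `B ≤ ρ(A)`. The claimed bound `B` is the larger root of
`(B - rₙ) (B - (S - T)) = T ∑ₖ (rₖ - rₙ)`. Splitting `∑ⱼ aᵢⱼ (rⱼ - rₙ)` into its diagonal and
off-diagonal parts shows that `xⱼ = (B - (S - T)) + (rⱼ - rₙ)` satisfies `B • x ≤ A *ᵥ x`; this
vector is positive unless `B = rₙ`, and then the all-ones vector gives `rₙ ≤ ρ(A)`.
-/

theorem Multiset.foldr_max_nonneg (s : Multiset ℝ) : 0 ≤ s.foldr max 0 := by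
  induction s using Multiset.induction_on with
  | empty => simp
  | cons a s ih => rw [Multiset.foldr_cons]; exact ih.trans (le_max_right _ _)

theorem Multiset.le_foldr_max {s : Multiset ℝ} {a : ℝ} (h : a ∈ s) : a ≤ s.foldr max 0 := by
  induction s using Multiset.induction_on with
  | empty => simp at h
  | cons b s ih =>
    rw [Multiset.foldr_cons]
    rcases Multiset.mem_cons.mp h with rfl | h
    · exact le_max_left _ _
    · exact (ih h).trans (le_max_right _ _)

theorem ofReal_le_spectralRadius_of_pow_le_norm_pow {𝒜 : Type*} [NormedRing 𝒜]
    [NormedAlgebra ℂ 𝒜] [CompleteSpace 𝒜] (a : 𝒜) {c : ℝ} (h : ∀ k : ℕ, c ^ k ≤ ‖a ^ k‖) :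
    ENNReal.ofReal c ≤ spectralRadius ℂ a := by
  rcases lt_or_ge c 0 with hc | hc
  · simp [ENNReal.ofReal_of_nonpos hc.le]
  refine ge_of_tendsto (spectrum.pow_nnnorm_pow_one_div_tendsto_nhds_spectralRadius a) ?_
  filter_upwards [Filter.eventually_ne_atTop 0] with k hk
  rw [← enorm_eq_nnnorm, ← ofReal_norm, one_div,
    ENNReal.ofReal_rpow_of_nonneg (norm_nonneg _) (by positivity)]
  refine ENNReal.ofReal_le_ofReal ?_
  calc c = (c ^ k) ^ (k⁻¹ : ℝ) := (pow_rpow_inv_natCast hc hk).symm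
    _ ≤ ‖a ^ k‖ ^ (k⁻¹ : ℝ) := by gcongr; exact h k

namespace Matrix

variable {ι : Type*} [Fintype ι]

section OrderedSemiring

variable {R : Type*} [CommSemiring R] [PartialOrder R] [IsOrderedRing R] {A : Matrix ι ι R}

theorem mulVec_mono_of_nonneg (hA : ∀ i j, 0 ≤ A i j) {x y : ι → R} (h : x ≤ y) :
    A *ᵥ x ≤ A *ᵥ y :=
  fun i => sum_le_sum fun j _ => mul_le_mul_of_nonneg_left (h j) (hA i j)

theorem pow_smul_le_pow_mulVec [DecidableEq ι] (hA : ∀ i j, 0 ≤ A i j) {x : ι → R} {c : R}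
    (hc : 0 ≤ c) (h : c • x ≤ A *ᵥ x) (k : ℕ) : c ^ k • x ≤ (A ^ k) *ᵥ x := by
  induction k with
  | zero => simp
  | succ k ih =>
    calc c ^ (k + 1) • x = c ^ k • (c • x) := by rw [pow_succ, mul_smul]
      _ ≤ c ^ k • (A *ᵥ x) := smul_le_smul_of_nonneg_left h (pow_nonneg hc k)
      _ = A *ᵥ (c ^ k • x) := (mulVec_smul A _ x).symm
      _ ≤ A *ᵥ ((A ^ k) *ᵥ x) := mulVec_mono_of_nonneg hA ih
      _ = (A ^ (k + 1)) *ᵥ x := by rw [mulVec_mulVec, pow_succ']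

end OrderedSemiring

theorem exists_forall_pow_le_sum_pow_apply [DecidableEq ι] {A : Matrix ι ι ℝ}
    (hA : ∀ i j, 0 ≤ A i j) {x : ι → ℝ} (hx : 0 < x) {c : ℝ} (hc : 0 ≤ c) (h : c • x ≤ A *ᵥ x) :
    ∃ i, ∀ k : ℕ, c ^ k ≤ ∑ j, (A ^ k) i j := by
  obtain ⟨-, ⟨i₀, hi₀⟩⟩ := Pi.lt_def.mp hx
  obtain ⟨i, -, hi⟩ := exists_max_image univ x ⟨i₀, mem_univ i₀⟩
  have hxi : 0 < x i := hi₀.trans_le (hi i₀ (mem_univ i₀))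
  refine ⟨i, fun k => le_of_mul_le_mul_right ?_ hxi⟩
  calc c ^ k * x i ≤ ((A ^ k) *ᵥ x) i := pow_smul_le_pow_mulVec hA hc h k i
    _ ≤ ∑ j, (A ^ k) i j * x i :=
      sum_le_sum fun j _ => mul_le_mul_of_nonneg_left (hi j (mem_univ j))
        (pow_apply_nonneg hA k i j)
    _ = (∑ j, (A ^ k) i j) * x i := (sum_mul ..).symm

section linfty

attribute [local instance] Matrix.linftyOpSeminormedAddCommGroup Matrix.linftyOpNormedRing
  Matrix.linftyOpNormedAlgebra

theorem sum_norm_apply_le_linfty_opNorm {κ α : Type*} [Fintype κ] [SeminormedAddCommGroup α]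
    (M : Matrix ι κ α) (i : ι) : ∑ j, ‖M i j‖ ≤ ‖M‖ := by
  have h := Finset.le_sup (f := fun i => ∑ j, ‖M i j‖₊) (mem_univ i)
  rw [← linfty_opNNNorm_def, ← NNReal.coe_le_coe] at h
  simpa using h

theorem ofReal_le_spectralRadius_of_smul_le_mulVec [DecidableEq ι] {A : Matrix ι ι ℝ}
    (hA : ∀ i j, 0 ≤ A i j) {x : ι → ℝ} (hx : 0 < x) {c : ℝ} (h : c • x ≤ A *ᵥ x) :
    ENNReal.ofReal c ≤ spectralRadius ℂ (A.map Complex.ofReal) := by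
  rcases lt_or_ge c 0 with hc | hc
  · simp [ENNReal.ofReal_of_nonpos hc.le]
  obtain ⟨i, hi⟩ := exists_forall_pow_le_sum_pow_apply hA hx hc h
  refine ofReal_le_spectralRadius_of_pow_le_norm_pow _ fun k => ?_
  calc c ^ k ≤ ∑ j, (A ^ k) i j := hi k
    _ = ∑ j, ‖((A.map Complex.ofReal) ^ k) i j‖ := by
      have hpow : (A.map Complex.ofReal) ^ k = (A ^ k).map Complex.ofReal :=
        (Matrix.map_pow A Complex.ofRealHom k).symm
      refine sum_congr rfl fun j _ => ?_
      rw [hpow, map_apply, Complex.norm_real, norm_of_nonneg (pow_apply_nonneg hA k i j)]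
    _ ≤ ‖(A.map Complex.ofReal) ^ k‖ := sum_norm_apply_le_linfty_opNorm _ i

end linfty

theorem mul_sum_add_sub_mul_le_mulVec [DecidableEq ι] {R : Type*} [CommRing R] [PartialOrder R]
    [IsOrderedRing R] {A : Matrix ι ι R} {S T : R} (hS : ∀ i, S ≤ A i i)
    (hT : ∀ i j, i ≠ j → T ≤ A i j) {d : ι → R} (hd : 0 ≤ d) (i : ι) :
    T * ∑ j, d j + (S - T) * d i ≤ (A *ᵥ d) i := by
  have hoff : T * ∑ j ∈ univ.erase i, d j ≤ ∑ j ∈ univ.erase i, A i j * d j := by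
    rw [mul_sum]
    exact sum_le_sum fun j hj =>
      mul_le_mul_of_nonneg_right (hT i j (ne_of_mem_erase hj).symm) (hd j)
  calc T * ∑ j, d j + (S - T) * d i = S * d i + T * ∑ j ∈ univ.erase i, d j := by
        rw [← add_sum_erase _ _ (mem_univ i)]; ring
    _ ≤ A i i * d i + ∑ j ∈ univ.erase i, A i j * d j :=
        add_le_add (mul_le_mul_of_nonneg_right (hS i) (hd i)) hoff
    _ = (A *ᵥ d) i := add_sum_erase _ (fun j => A i j * d j) (mem_univ i)

end Matrix

section specRad

variable {n : ℕ} {A : Matrix (Fin n) (Fin n) ℝ}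

theorem specRad_nonneg (A : Matrix (Fin n) (Fin n) ℝ) : 0 ≤ specRad A :=
  Multiset.foldr_max_nonneg _

theorem norm_le_specRad_of_mem_spectrum {μ : ℂ} (hμ : μ ∈ spectrum ℂ (A.map Complex.ofReal)) :
    ‖μ‖ ≤ specRad A := by
  rw [Matrix.mem_spectrum_iff_isRoot_charpoly, ← Polynomial.mem_roots (charpoly_monic _).ne_zero]
    at hμ
  exact Multiset.le_foldr_max (Multiset.mem_map_of_mem _ hμ)

theorem spectralRadius_le_specRad :
    spectralRadius ℂ (A.map Complex.ofReal) ≤ ENNReal.ofReal (specRad A) :=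
  iSup₂_le fun _ hμ => by
    rw [← enorm_eq_nnnorm, ← ofReal_norm]
    exact ENNReal.ofReal_le_ofReal (norm_le_specRad_of_mem_spectrum hμ)

theorem le_specRad_of_smul_le_mulVec (hA : ∀ i j, 0 ≤ A i j) {x : Fin n → ℝ} (hx : 0 < x)
    {c : ℝ} (h : c • x ≤ A *ᵥ x) : c ≤ specRad A :=
  (ENNReal.ofReal_le_ofReal_iff (specRad_nonneg A)).mp
    ((ofReal_le_spectralRadius_of_smul_le_mulVec hA hx h).trans spectralRadius_le_specRad)

theorem le_specRad_of_le_sum_apply (hn : 0 < n) (hA : ∀ i j, 0 ≤ A i j) {c : ℝ}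
    (h : ∀ i, c ≤ ∑ j, A i j) : c ≤ specRad A := by
  have hone : (0 : Fin n → ℝ) < 1 := Pi.lt_def.mpr ⟨fun _ => zero_le_one, ⟨0, hn⟩, one_pos⟩
  refine le_specRad_of_smul_le_mulVec hA hone fun i => ?_
  simpa [mulVec, dotProduct] using h i

end specRad

theorem le_specRad_of_sub_mul_sub_le {n : ℕ} (hn : 0 < n) {A : Matrix (Fin n) (Fin n) ℝ}
    (hA : ∀ i j, 0 ≤ A i j) {S T : ℝ} (hS : ∀ i, S ≤ A i i) (hT : ∀ i j, i ≠ j → T ≤ A i j)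
    {r : Fin n → ℝ} (hr : ∀ i, r i = ∑ j, A i j) {m B : ℝ} (hm : ∀ i, m ≤ r i)
    (hB : S - T < B) (hquad : (B - m) * (B - (S - T)) ≤ T * ∑ j, (r j - m)) :
    B ≤ specRad A := by
  set d : Fin n → ℝ := fun j => r j - m
  have hd : 0 ≤ d := fun j => sub_nonneg.mpr (hm j)
  have hx : ∀ j, 0 < B - (S - T) + d j := fun j =>
    add_pos_of_pos_of_nonneg (sub_pos.mpr hB) (hd j)
  refine le_specRad_of_smul_le_mulVec hA (x := fun j => B - (S - T) + d j)
    (Pi.lt_def.mpr ⟨fun j => (hx j).le, ⟨0, hn⟩, hx _⟩) fun i => ?_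
  have hAx : (A *ᵥ fun j => B - (S - T) + d j) i = (B - (S - T)) * r i + (A *ᵥ d) i := by
    simp only [mulVec, dotProduct, mul_add, sum_add_distrib, ← sum_mul, ← hr, mul_comm (r i)]
  have hrow := mul_sum_add_sub_mul_le_mulVec hS hT hd i
  simp only [Pi.smul_apply, smul_eq_mul, hAx]
  simp only [d] at hrow ⊢
  linarith

theorem stmt_5 {n : ℕ} (hn : 0 < n) (A : Matrix (Fin n) (Fin n) ℝ)
    (hA : ∀ i j, 0 ≤ A i j)
    (r : Fin n → ℝ) (hr : ∀ i, r i = ∑ j, A i j)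
    (S : ℝ) (hS : IsLeast {x | ∃ i, x = A i i} S)
    (T : ℝ) (hT : IsLeast {x | ∃ i j, i ≠ j ∧ x = A i j} T)
    (hord : ∀ i j : Fin n, i ≤ j → r j ≤ r i) :
    specRad A ≥
      (r ⟨n - 1, by omega⟩ + S - T +
        Real.sqrt ((r ⟨n - 1, by omega⟩ - S + T) ^ 2 +
          4 * T * ∑ k ∈ Finset.Iio (⟨n - 1, by omega⟩ : Fin n),
            (r k - r ⟨n - 1, by omega⟩))) / 2 := by
  set last : Fin n := ⟨n - 1, by omega⟩
  have hlast : ∀ i, i ≤ last := fun i => Fin.le_def.mpr (by simp only [last]; omega)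
  have hmin : ∀ i, r last ≤ r i := fun i => hord i last (hlast i)
  have hS' : ∀ i, S ≤ A i i := fun i => hS.2 ⟨i, rfl⟩
  have hT' : ∀ i j, i ≠ j → T ≤ A i j := fun i j hij => hT.2 ⟨i, j, hij, rfl⟩
  have hT0 : 0 ≤ T := by obtain ⟨i, j, -, rfl⟩ := hT.1; exact hA i j
  have hSr : S ≤ r last :=
    (hS' last).trans (hr last ▸ single_le_sum (fun j _ => hA last j) (mem_univ last))
  have hsum : ∑ k ∈ Iio last, (r k - r last) = ∑ k, (r k - r last) :=
    sum_subset (subset_univ _) fun k _ hk => by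
      rw [(hlast k).antisymm (not_lt.mp (by simpa using hk)), sub_self]
  rw [ge_iff_le, hsum]
  have hD : 0 ≤ (r last - S + T) ^ 2 + 4 * T * ∑ k, (r k - r last) :=
    add_nonneg (sq_nonneg _)
      (mul_nonneg (by positivity) (sum_nonneg fun k _ => sub_nonneg.mpr (hmin k)))
  have hs := sq_sqrt hD
  set B := (r last + S - T + √((r last - S + T) ^ 2 + 4 * T * ∑ k, (r k - r last))) / 2
  rcases le_or_gt B (r last) with hB | hB
  · exact hB.trans (le_specRad_of_le_sum_apply hn hA fun i => hr i ▸ hmin i)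
  · exact le_specRad_of_sub_mul_sub_le hn hA hS' hT' hr hmin (by linarith)
      (le_of_eq (by linear_combination hs / 4))
end
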